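/- Let a > 100 be an integer and let (u₁, u₂, n) be a solution to the unit equation with u₁ = ε^{x₁}·δ^{y₁}, u₂ = s·ε^{x₂}·δ^{y₂} (s ∈ {1,-1}), x₁ ≠ x₂, and |u₂| > a^{X/2} where X := max{|x₁|, |x₂|, |y₁|, |y₂|}. Then X > (1/2)·(a+2)·(log(a+1) - log 2). -/

import Mathlib

/-!
Because `|n| ≤ a^{1/3}` is tiny compared with `|u₂| > a^{X/2} ≥ a^{1/2}`, the unit `u₂` must be
negative and `u₁` agrees with `|u₂|` up to a relative error `a^{-1/6} < 47/100`. Taking logarithms,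
the linear form `(x₁ - x₂) log ε + (y₁ - y₂) log δ` is at most `log (100/53)` in absolute value.
Since `x₁ ≠ x₂`, `log ε > log (a+1)` and `log δ < 1/(a+1)`, this forces
`2X ≥ |y₁ - y₂| ≥ (a+1) (log (a+1) - log (100/53))`, which exceeds `(a+2) (log (a+1) - log 2)`
because `log x / x` is decreasing.
-/

open Real

lemma abs_sub_abs_le_of_add_eq {u₁ u₂ n c : ℝ} (h₁ : 0 < u₁) (hc : c ≤ 1)
    (hn : |n| < c * |u₂|) (hsum : u₁ + u₂ = n) : |(u₁ - |u₂|)| ≤ c * |u₂| := by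
  have hu₂ : u₂ < 0 := by
    by_contra! h₂
    rw [abs_of_nonneg h₂] at hn
    linarith [le_abs_self n, mul_le_of_le_one_left h₂ hc]
  rw [abs_of_neg hu₂, sub_neg_eq_add, hsum, ← abs_of_neg hu₂]
  exact hn.le

lemma abs_log_sub_log_le {u b τ : ℝ} (hb : 0 < b) (hτ : τ < 1) (h : |u - b| ≤ τ * b) :
    |log u - log b| ≤ -log (1 - τ) := by
  obtain ⟨hlo, hhi⟩ := abs_le.mp h
  have hτ₀ : 0 ≤ τ := by nlinarith [abs_nonneg (u - b)]
  have hlo' : (1 - τ) * b ≤ u := by linarith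
  have hhi' : u ≤ (1 + τ) * b := by linarith
  have hu : 0 < u := lt_of_lt_of_le (by nlinarith) hlo'
  have hsum : log (1 + τ) + log (1 - τ) ≤ 0 := by
    rw [← log_mul (by linarith) (by linarith)]
    exact log_nonpos (by nlinarith) (by nlinarith)
  have h₁ := log_le_log (by nlinarith) hlo'
  have h₂ := log_le_log hu hhi'
  rw [log_mul (by linarith) hb.ne'] at h₁ h₂
  rw [abs_le]
  constructor <;> linarith

lemma log_zpow_mul_zpow {ρ δ : ℝ} (hρ : 0 < ρ) (hδ : 0 < δ) (x y : ℤ) :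
    log (ρ ^ x * δ ^ y) = x * log ρ + y * log δ := by
  rw [log_mul (zpow_pos hρ x).ne' (zpow_pos hδ y).ne', log_zpow, log_zpow]

lemma le_add_abs_mul_of_abs_mul_add_mul_le {p q α β E : ℝ} (hα : 0 ≤ α) (hβ : 0 ≤ β)
    (hp : 1 ≤ |p|) (h : |p * α + q * β| ≤ E) : α ≤ E + |q| * β := by
  calc α ≤ |p| * α := le_mul_of_one_le_left hα hp
    _ = |p * α + q * β - q * β| := by rw [add_sub_cancel_right, abs_mul, abs_of_nonneg hα]
    _ ≤ |p * α + q * β| + |q * β| := abs_sub _ _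
    _ ≤ E + |q| * β := by rw [abs_mul, abs_of_nonneg hβ]; linarith

lemma log_add_log_one_sub_le {ρ δ τ : ℝ} (hρ : 1 ≤ ρ) (hδ : 1 ≤ δ) (hτ : τ < 1)
    {x₁ y₁ x₂ y₂ : ℤ} (hx : x₁ ≠ x₂)
    (h : |ρ ^ x₁ * δ ^ y₁ - ρ ^ x₂ * δ ^ y₂| ≤ τ * (ρ ^ x₂ * δ ^ y₂)) :
    log ρ + log (1 - τ) ≤ |(y₁ - y₂ : ℝ)| * log δ := by
  have hρ₀ : 0 < ρ := by linarith
  have hδ₀ : 0 < δ := by linarith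
  have hlog := abs_log_sub_log_le (by positivity) hτ h
  rw [log_zpow_mul_zpow hρ₀ hδ₀, log_zpow_mul_zpow hρ₀ hδ₀] at hlog
  have hp : (1 : ℝ) ≤ |(x₁ - x₂ : ℝ)| := by
    exact_mod_cast Int.one_le_abs (sub_ne_zero.mpr hx)
  have := le_add_abs_mul_of_abs_mul_add_mul_le (log_nonneg hρ) (log_nonneg hδ) hp
    (q := (y₁ - y₂ : ℝ)) (E := -log (1 - τ)) (by convert hlog using 2; ring)
  linarith

lemma log_one_add_inv_le {ρ x : ℝ} (hx : 0 < x) (hxρ : x ≤ ρ) : log (1 + ρ⁻¹) ≤ x⁻¹ := by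
  have hρ : 0 < ρ := hx.trans_le hxρ
  have h := log_le_sub_one_of_pos (show 0 < 1 + ρ⁻¹ by positivity)
  linarith [inv_anti₀ hx hxρ]

lemma rpow_one_third_le_mul_rpow_one_half {a : ℝ} (ha : 101 ≤ a) :
    a ^ (1 / 3 : ℝ) ≤ 47 / 100 * a ^ (1 / 2 : ℝ) := by
  have ha₀ : 0 ≤ a := by linarith
  set r := a ^ (1 / 6 : ℝ) with hr
  have hpow : ∀ k : ℕ, a ^ ((k : ℝ) / 6) = r ^ k := fun k => by
    rw [hr, ← rpow_natCast, ← rpow_mul ha₀]; ring_nf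
  have hr₆ : (100 / 47 : ℝ) ^ 6 ≤ r ^ 6 := by
    rw [← hpow 6]; norm_num; linarith
  have hr_ge : 100 / 47 ≤ r :=
    (pow_le_pow_iff_left₀ (by norm_num) (rpow_nonneg ha₀ _) (by norm_num)).mp hr₆
  have h₂ := hpow 2
  have h₃ := hpow 3
  norm_num at h₂ h₃
  rw [h₂, h₃]
  nlinarith [sq_nonneg r]

lemma add_one_mul_log_sub_log_two_lt {x : ℝ} (hx : 102 ≤ x) :
    (x + 1) * (log x - log 2) < x * (log x + log (53 / 100)) := by
  have he : exp 1 ≤ 102 := by linarith [exp_one_lt_d9]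
  have hdecr : log x / x ≤ log 102 / 102 :=
    log_div_self_antitoneOn (by simpa using he) (by simpa using he.trans hx) hx
  have hlogx : log x ≤ x * (log 102 / 102) := by
    rwa [div_le_iff₀ (by linarith), mul_comm] at hdecr
  have h102 : log 102 < 7 * log 2 := by
    rw [show 7 * log 2 = log (2 ^ 7) by rw [log_pow]; norm_num]
    exact log_lt_log (by norm_num) (by norm_num)
  have h5350 : 3 / 53 ≤ log (53 / 50) := by
    have := one_sub_inv_le_log_of_pos (show (0 : ℝ) < 53 / 50 by norm_num)
    norm_num at this ⊢; linarith
  have hsplit : log (53 / 50) = log 2 + log (53 / 100) := by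
    rw [← log_mul (by norm_num) (by norm_num)]; norm_num
  nlinarith [log_two_lt_d9, log_pos (show (1 : ℝ) < 2 by norm_num)]

theorem exponent_lower_bound (a : ℤ) (ha : 100 < a) (ρ : ℝ)
    (hρ₁ : (a : ℝ) + 1 < ρ)
    (u₁ u₂ : ℝ) (n : ℤ) (x₁ y₁ x₂ y₂ : ℤ) (s : ℝ) (hs : s = 1 ∨ s = -1)
    (hu₁ : u₁ = ρ ^ x₁ * (1 + ρ⁻¹) ^ y₁)
    (hu₂ : u₂ = s * ρ ^ x₂ * (1 + ρ⁻¹) ^ y₂)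
    (hsum : u₁ + u₂ = (n : ℝ))
    (hn : |(n : ℝ)| ≤ (a : ℝ) ^ ((1 : ℝ) / 3))
    (hx : x₁ ≠ x₂)
    (X : ℤ) (hXdef : X = |x₁| ⊔ |x₂| ⊔ |y₁| ⊔ |y₂|)
    (hbig : (a : ℝ) ^ ((X : ℝ) / 2) < |u₂|) :
    (X : ℝ) > (1 / 2) * ((a : ℝ) + 2) * (Real.log ((a : ℝ) + 1) - Real.log 2) := by
  have ha' : (101 : ℝ) ≤ a := by exact_mod_cast ha
  have hρ : 1 ≤ ρ := by linarith
  have hρ₀ : 0 < ρ := by linarith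
  have hδ : 1 ≤ 1 + ρ⁻¹ := le_add_of_nonneg_right (by positivity)
  have hXbounds : |x₁| ≤ X ∧ |x₂| ≤ X ∧ |y₁| ≤ X ∧ |y₂| ≤ X := by simp [hXdef]
  simp only [abs_le] at hXbounds
  have hX₁ : (1 : ℝ) ≤ X := by exact_mod_cast (show 1 ≤ X by omega)
  have hy : |(y₁ - y₂ : ℝ)| ≤ 2 * X := by
    exact_mod_cast (show |y₁ - y₂| ≤ 2 * X by rw [abs_le]; omega)
  have hu₂abs : |u₂| = ρ ^ x₂ * (1 + ρ⁻¹) ^ y₂ := by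
    rw [hu₂, mul_assoc, abs_mul, abs_of_pos (show 0 < ρ ^ x₂ * (1 + ρ⁻¹) ^ y₂ by positivity)]
    rcases hs with rfl | rfl <;> simp
  have hnu₂ : |(n : ℝ)| < 47 / 100 * |u₂| := calc
    |(n : ℝ)| ≤ (a : ℝ) ^ (1 / 2 : ℝ) * (47 / 100) := by
      linarith [rpow_one_third_le_mul_rpow_one_half ha']
    _ ≤ (a : ℝ) ^ ((X : ℝ) / 2) * (47 / 100) := by gcongr; linarith
    _ < 47 / 100 * |u₂| := by linarith
  have hclose := abs_sub_abs_le_of_add_eq (by rw [hu₁]; positivity) (by norm_num) hnu₂ hsum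
  rw [hu₁, hu₂abs] at hclose
  have hkey := log_add_log_one_sub_le hρ hδ (by norm_num) hx hclose
  have hlogρ : log ((a : ℝ) + 1) ≤ log ρ := log_le_log (by linarith) hρ₁.le
  have h2X : log ((a : ℝ) + 1) + log (53 / 100) ≤ 2 * X / ((a : ℝ) + 1) := by
    calc _ ≤ |(y₁ - y₂ : ℝ)| * log (1 + ρ⁻¹) := by norm_num at hkey; linarith
      _ ≤ 2 * X * ((a : ℝ) + 1)⁻¹ := by
        gcongr
        exacts [log_nonneg hδ, log_one_add_inv_le (by linarith) hρ₁.le]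
  rw [le_div_iff₀ (by linarith)] at h2X
  linarith [add_one_mul_log_sub_log_two_lt (x := (a : ℝ) + 1) (by linarith)]
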